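/- Let G be a finite abelian group of order n with identity e, A a Cayley matrix on G, and fix τ ∈ (0, 1/n) with τN ∈ ℕ. Define the measure μ(e) = 1 − τ(n−1) and μ(g) = τ for g ≠ e, and let W = D A Dᵀ be the model matrix of SBM(A, μ, N), and V the associated isometry. If χ_{α_1},...,χ_{α_m} (m > 1) are distinct characters of G that are all eigenvectors of A with the same eigenvalue γ, then for each 1 < i ≤ m the vector V((i−1)χ_{α_i} − Σ_{j=1}^{i−1} χ_{α_j}) is an eigenvector of W with eigenvalue Nτγ, and these m−1 vectors are pairwise orthogonal. In particular, Nτγ is an eigenvalue of W with multiplicity at least m−1. -/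

import Mathlib

open scoped BigOperators ComplexConjugate
open Matrix Finset

/-- The `N × n` block indicator matrix, over `ℂ`. -/
def blockD (N n : ℕ) (k : Fin n → ℕ) : Matrix (Fin N) (Fin n) ℂ :=
  Matrix.of fun r j =>
    if (∑ i : Fin n, if (i : ℕ) < (j : ℕ) then k i else 0) ≤ (r : ℕ) ∧
        (r : ℕ) < (∑ i : Fin n, if (i : ℕ) < (j : ℕ) then k i else 0) + k j
    then 1 else 0

/-- The vector `(i-1)χ_{α_i} - ∑_{j<i} χ_{α_j}` (0-indexed: `i·χ_{α_i} - ∑_{j<i} χ_{α_j}`),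
viewed as a vector in `ℂⁿ` via the enumeration `g`. -/
noncomputable def pertVec {n m : ℕ} {G : Type*} [CommGroup G] (g : Fin n ≃ G) (α : Fin m → (G →* ℂ)) (i : Fin m) :
    Fin n → ℂ :=
  fun p => ((i : ℕ) : ℂ) * α i (g p) - ∑ j : Fin m, if (j : ℕ) < (i : ℕ) then α j (g p) else 0

/-!
Each `pertVec g α i` is a combination of the characters `α j ∘ g`, hence a `γ`-eigenvector of `A`,
and it vanishes at the identity, i.e. on the large block. All other blocks have size `τN` and
weight `τ`, so on such vectors `Dᵀ D` (with `D = blockD N n k`) acts as the scalar `τN` and `V`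
as `(Nτ)^(-1/2) D`. Hence `W (V u) = (Nτ)^(-1/2) D A (Dᵀ D) u = Nτγ • V u` and
`⟪V u, V u'⟫ = ⟪u, u'⟫`. Orthogonality of distinct characters gives
`⟪u_i, u_i'⟫ = |G| (i² + i) δ_{i i'}`, so the `m - 1` vectors with `i > 0` are nonzero and
pairwise orthogonal, hence linearly independent in the eigenspace.
-/

lemma Matrix.diagonal_mulVec_eq_smul {ι R : Type*} [Fintype ι] [DecidableEq ι] [Semiring R]
    {d x : ι → R} {c : R} (h : ∀ p, x p ≠ 0 → d p = c) : diagonal d *ᵥ x = c • x := by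
  ext p
  rw [mulVec_diagonal, Pi.smul_apply, smul_eq_mul]
  by_cases hx : x p = 0
  · simp [hx]
  · rw [h p hx]

lemma card_le_finrank_of_pairwise_star_dotProduct_eq_zero {ι κ 𝕜 : Type*} [RCLike 𝕜] [Fintype ι]
    [Fintype κ] {E : Submodule 𝕜 (κ → 𝕜)} {v : ι → κ → 𝕜} (hvE : ∀ i, v i ∈ E)
    (hv : ∀ i, v i ≠ 0) (horth : Pairwise fun i j => star (v i) ⬝ᵥ v j = 0) :
    Fintype.card ι ≤ Module.finrank 𝕜 E := by
  have hli : LinearIndependent 𝕜 v := by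
    refine RCLike.linearIndependent_of_ne_zero_of_wInner_one_eq_zero hv fun i j hij => ?_
    simpa [RCLike.wInner_one_eq_sum, dotProduct, mul_comm] using horth hij
  exact (LinearIndependent.of_comp E.subtype (v := fun i => (⟨v i, hvE i⟩ : E)) hli)
    |>.fintype_card_le_finrank

section BlockModel

variable {ι κ R : Type*} [Fintype ι] [Fintype κ] [CommSemiring R] {D : Matrix ι κ R}
  {x : κ → R} {b : R}

lemma mul_mul_transpose_mulVec_mulVec (hDx : (Dᵀ * D) *ᵥ x = b • x) {A : Matrix κ κ R} {γ : R}
    (hAx : A *ᵥ x = γ • x) : (D * A * Dᵀ) *ᵥ (D *ᵥ x) = (b * γ) • D *ᵥ x := by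
  rw [mulVec_mulVec, Matrix.mul_assoc, ← mulVec_mulVec, hDx, mulVec_smul, ← mulVec_mulVec, hAx,
    mulVec_smul, smul_smul]

lemma star_mulVec_dotProduct_mulVec [StarRing R] (hDx : (Dᴴ * D) *ᵥ x = b • x) (y : κ → R) :
    star (D *ᵥ y) ⬝ᵥ D *ᵥ x = b * (star y ⬝ᵥ x) := by
  rw [star_mulVec, ← dotProduct_mulVec, mulVec_mulVec, hDx, dotProduct_smul, smul_eq_mul]

end BlockModel

section Characters

variable {G : Type*} [CommGroup G] [Fintype G]

lemma MonoidHom.conj_apply_eq_apply_inv (χ : G →* ℂ) (x : G) : conj (χ x) = χ x⁻¹ := by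
  have hnorm : ‖χ x‖ = 1 := Complex.norm_eq_one_of_pow_eq_one
    (by rw [← map_pow, pow_card_eq_one, map_one]) Fintype.card_ne_zero
  rw [← Complex.inv_eq_conj hnorm]
  exact inv_eq_of_mul_eq_one_right (by rw [← map_mul, mul_inv_cancel, map_one])

lemma MonoidHom.sum_conj_mul_eq (χ ψ : G →* ℂ) [Decidable (χ = ψ)] :
    ∑ x, conj (χ x) * ψ x = if χ = ψ then (Fintype.card G : ℂ) else 0 := by
  simp_rw [conj_apply_eq_apply_inv]
  split_ifs with h
  · subst h
    simp_rw [← map_mul, inv_mul_cancel, map_one, sum_const, card_univ, nsmul_one]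
  · refine sum_hom_units_eq_zero (χ.comp (invMonoidHom : G →* G) * ψ) fun h1 => h ?_
    ext x
    have hx : χ x⁻¹ * ψ x = 1 := DFunLike.congr_fun h1 x
    rw [← one_mul (χ x), ← hx, mul_comm (χ x⁻¹), mul_assoc, ← map_mul, inv_mul_cancel,
      map_one, mul_one]

lemma star_comp_dotProduct_comp {ι : Type*} [Fintype ι] (g : ι ≃ G) (χ ψ : G →* ℂ)
    [Decidable (χ = ψ)] :
    star (χ ∘ g) ⬝ᵥ (ψ ∘ g) = if χ = ψ then (Fintype.card G : ℂ) else 0 := by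
  rw [← χ.sum_conj_mul_eq ψ, ← g.sum_comp]
  rfl

end Characters

section PertVec

variable {n m : ℕ} {G : Type*} [CommGroup G] (g : Fin n ≃ G) (α : Fin m → (G →* ℂ))

lemma pertVec_eq (i : Fin m) :
    pertVec g α i = (i : ℂ) • (α i ∘ g) - ∑ j ∈ Iio i, α j ∘ g := by
  ext p
  simp [pertVec, Finset.sum_apply, ← sum_filter, filter_gt_eq_Iio]

lemma pertVec_apply_of_eq_one {i : Fin m} {p : Fin n} (hp : g p = 1) : pertVec g α i p = 0 := by
  simp [pertVec_eq, Finset.sum_apply, hp]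

lemma mulVec_pertVec {A : Matrix (Fin n) (Fin n) ℂ} {γ : ℂ}
    (hA : ∀ j, A *ᵥ (α j ∘ g) = γ • (α j ∘ g)) (i : Fin m) :
    A *ᵥ pertVec g α i = γ • pertVec g α i := by
  simp only [pertVec_eq, mulVec_sub, mulVec_smul, mulVec_sum, hA, smul_sub, smul_sum, smul_comm γ]

variable [Fintype G] {α}

lemma star_pertVec_dotProduct_comp (hα : Function.Injective α) (i b : Fin m) :
    star (pertVec g α i) ⬝ᵥ (α b ∘ g) =
      Fintype.card G * ((if i = b then (i : ℂ) else 0) - if b < i then 1 else 0) := by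
  classical
  simp only [pertVec_eq, star_sub, star_smul, star_sum, star_natCast, sub_dotProduct,
    smul_dotProduct, sum_dotProduct, star_comp_dotProduct_comp, hα.eq_iff, smul_eq_mul,
    sum_ite_eq', mem_Iio]
  split_ifs <;> ring

lemma star_pertVec_dotProduct_pertVec (hα : Function.Injective α) (i i' : Fin m) :
    star (pertVec g α i) ⬝ᵥ pertVec g α i' =
      if i = i' then Fintype.card G * ((i : ℂ) * i + i) else 0 := by
  have hcount : ∑ b ∈ Iio i', (if b < i then (1 : ℂ) else 0) = ((min i' i : Fin m) : ℕ) := by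
    rw [sum_boole, ← Fin.card_Iio]
    congr 2
    ext b
    simp
  rw [pertVec_eq g α i', dotProduct_sub, dotProduct_smul, dotProduct_sum]
  simp only [star_pertVec_dotProduct_comp g hα, smul_eq_mul, ← mul_sum, sum_sub_distrib,
    sum_ite_eq, mem_Iio, hcount]
  rcases lt_trichotomy i i' with h | rfl | h
  · simp [h, h.ne, h.not_gt, min_eq_right h.le]
  · simp
    ring
  · simp [h, h.ne', h.not_gt, min_eq_left h.le]
    ring

lemma star_pertVec_dotProduct_self_ne_zero (hα : Function.Injective α) {i : Fin m}
    (hi : 0 < (i : ℕ)) : star (pertVec g α i) ⬝ᵥ pertVec g α i ≠ 0 := by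
  rw [star_pertVec_dotProduct_pertVec g hα, if_pos rfl]
  exact_mod_cast (by positivity : 0 < Fintype.card G * ((i : ℕ) * i + i)).ne'

end PertVec

section Block

variable {N n : ℕ} {k : Fin n → ℕ}

lemma blockD_apply (r : Fin N) (j : Fin n) :
    blockD N n k r j = if (r : ℕ) ∈ Ico (∑ i ∈ Iio j, k i) (∑ i ∈ Iic j, k i) then 1 else 0 := by
  have hstart : (∑ i : Fin n, if (i : ℕ) < (j : ℕ) then k i else 0) = ∑ i ∈ Iio j, k i := by
    rw [← sum_filter]
    congr 1
    ext i
    simp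
  rw [← Iio_insert, sum_insert notMem_Iio_self, add_comm (k j)]
  simp only [blockD, of_apply, hstart, mem_Ico]

lemma blockD_conjTranspose : (blockD N n k)ᴴ = (blockD N n k)ᵀ := by
  ext r j
  simp only [conjTranspose_apply, transpose_apply, blockD_apply]
  split_ifs <;> simp

lemma blockD_transpose_mul_self (hk : ∑ i, k i ≤ N) :
    (blockD N n k)ᵀ * blockD N n k = diagonal fun j => (k j : ℂ) := by
  ext p q
  simp only [mul_apply, transpose_apply, blockD_apply, mul_ite, mul_one, mul_zero]
  rcases eq_or_ne p q with rfl | hpq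
  · have hsub : Ico (∑ i ∈ Iio p, k i) (∑ i ∈ Iic p, k i) ⊆ range N := fun r hr =>
      mem_range.2 ((mem_Ico.1 hr).2.trans_le ((sum_le_sum_of_subset (subset_univ _)).trans hk))
    simp only [← ite_and, and_self]
    rw [diagonal_apply_eq, Fin.sum_univ_eq_sum_range
      (fun r => if r ∈ Ico (∑ i ∈ Iio p, k i) (∑ i ∈ Iic p, k i) then (1 : ℂ) else 0),
      sum_ite_mem, inter_eq_right.2 hsub, sum_const, Nat.card_Ico, ← Iio_insert,
      sum_insert notMem_Iio_self, Nat.add_sub_cancel, nsmul_one]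
  · rw [diagonal_apply_ne _ hpq]
    refine sum_eq_zero fun r _ => ?_
    split_ifs with hq hp <;> try rfl
    rw [mem_Ico] at hp hq
    have hlt : ∀ {a b : Fin n}, a < b → ∑ i ∈ Iic a, k i ≤ ∑ i ∈ Iio b, k i :=
      fun h => sum_le_sum_of_subset fun i hi => mem_Iio.2 ((mem_Iic.1 hi).trans_lt h)
    rcases hpq.lt_or_gt with h | h
    · exact absurd (hlt h) (by omega)
    · exact absurd (hlt h) (by omega)

end Block

section OneLargeBlock

variable {N n : ℕ} {x : Fin n → ℂ}

lemma sum_eq_of_one_large_block {b : ℕ} (hn : 0 < n) {k : Fin n → ℕ}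
    (hk : ∀ i, k i = if (i : ℕ) = 0 then N - (n - 1) * b else b) (hb : (n - 1) * b ≤ N) :
    ∑ i, k i = N := by
  obtain ⟨n, rfl⟩ := Nat.exists_eq_succ_of_ne_zero hn.ne'
  simp only [Fin.sum_univ_succ, hk, Fin.val_zero, Fin.val_succ, if_pos, Nat.succ_ne_zero,
    if_false, sum_const, card_univ, Fintype.card_fin, smul_eq_mul]
  simp at hb ⊢
  omega

lemma blockD_transpose_mul_self_mulVec {k : Fin n → ℕ} {b : ℕ} (hsum : ∑ i, k i ≤ N)
    (hk : ∀ i : Fin n, (i : ℕ) ≠ 0 → k i = b) (hx : ∀ p : Fin n, (p : ℕ) = 0 → x p = 0) :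
    ((blockD N n k)ᵀ * blockD N n k) *ᵥ x = (b : ℂ) • x := by
  rw [blockD_transpose_mul_self hsum]
  exact diagonal_mulVec_eq_smul fun p hp => by rw [hk p fun h0 => hp (hx p h0)]

lemma inv_sqrt_smul_mul_diagonal_mulVec {ι : Type*} {μ : Fin n → ℝ} {τ : ℝ}
    (hμ : ∀ i : Fin n, (i : ℕ) ≠ 0 → μ i = τ) (hx : ∀ p : Fin n, (p : ℕ) = 0 → x p = 0)
    (D : Matrix ι (Fin n) ℂ) (a : ℝ) :
    ((Real.sqrt a : ℂ)⁻¹ • (D * diagonal fun i => ((Real.sqrt (μ i))⁻¹ : ℂ))) *ᵥ x =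
      (((Real.sqrt a)⁻¹ * (Real.sqrt τ)⁻¹ : ℝ) : ℂ) • D *ᵥ x := by
  rw [smul_mulVec, ← mulVec_mulVec, diagonal_mulVec_eq_smul (c := (Real.sqrt τ : ℂ)⁻¹)
    fun p hp => by rw [hμ p fun h0 => hp (hx p h0)], mulVec_smul, smul_smul]
  push_cast
  rfl

end OneLargeBlock

theorem one_large_block_eigenvectors_general
    (n N : ℕ) (hn : 0 < n) (hN : 0 < N)
    (G : Type*) [CommGroup G] [Fintype G]
    (g : Fin n ≃ G) (hg0 : g ⟨0, hn⟩ = 1)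
    (A : Matrix (Fin n) (Fin n) ℂ)
    (τ : ℝ) (hτpos : 0 < τ)
    (kτ : ℕ) (hkτ : (kτ : ℝ) = τ * N) (hkle : (n - 1) * kτ ≤ N)
    (k : Fin n → ℕ) (hk : ∀ i, k i = if (i : ℕ) = 0 then N - (n - 1) * kτ else kτ)
    (μ : Fin n → ℝ) (hμ : ∀ i, μ i = if (i : ℕ) = 0 then 1 - τ * (n - 1) else τ)
    (W : Matrix (Fin N) (Fin N) ℂ)
    (hW : W = blockD N n k * A * (blockD N n k)ᵀ)
    (V : Matrix (Fin N) (Fin n) ℂ)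
    (hV : V = ((Real.sqrt N : ℂ))⁻¹ •
        (blockD N n k * Matrix.diagonal fun i => ((Real.sqrt (μ i))⁻¹ : ℂ)))
    (m : ℕ)
    (α : Fin m → (G →* ℂ))
    (hαinj : Function.Injective α)
    (γ : ℂ)
    (hαeig : ∀ j : Fin m, A.mulVec (fun p => α j (g p)) = γ • fun p => α j (g p)) :
    (∀ i : Fin m, 0 < (i : ℕ) →
        W.mulVec (V.mulVec (pertVec g α i)) =
          ((N : ℂ) * (τ : ℂ) * γ) • V.mulVec (pertVec g α i)) ∧
      (∀ i i' : Fin m, 0 < (i : ℕ) → 0 < (i' : ℕ) → i ≠ i' →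
        star (V.mulVec (pertVec g α i)) ⬝ᵥ V.mulVec (pertVec g α i') = 0) ∧
      m - 1 ≤ Module.finrank ℂ
        (Module.End.eigenspace (Matrix.toLin' W) ((N : ℂ) * (τ : ℂ) * γ)) := by
  set u := pertVec g α
  set r : ℝ := (Real.sqrt N)⁻¹ * (Real.sqrt τ)⁻¹
  have hu0 : ∀ i (p : Fin n), (p : ℕ) = 0 → u i p = 0 := fun i p hp =>
    pertVec_apply_of_eq_one g α ((Fin.ext hp : p = ⟨0, hn⟩) ▸ hg0)
  have hDu : ∀ i, ((blockD N n k)ᵀ * blockD N n k) *ᵥ u i = (τ * N : ℂ) • u i := fun i => by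
    rw [blockD_transpose_mul_self_mulVec (sum_eq_of_one_large_block hn hk hkle).le
      (fun p hp => by rw [hk, if_neg hp]) (hu0 i)]
    exact_mod_cast congrArg (fun t : ℝ => (t : ℂ) • u i) hkτ
  have hVu : ∀ i, V *ᵥ u i = (r : ℂ) • blockD N n k *ᵥ u i := fun i =>
    hV ▸ inv_sqrt_smul_mul_diagonal_mulVec (fun p hp => by rw [hμ, if_neg hp]) (hu0 i) _ _
  have hr : (r : ℂ) * r * (τ * N) = 1 := by
    have hN' : (0 : ℝ) < N := Nat.cast_pos.2 hN
    norm_cast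
    simp only [r]
    field_simp
    rw [Real.sq_sqrt hN'.le, Real.sq_sqrt hτpos.le, mul_comm]
  have heig : ∀ i, W *ᵥ (V *ᵥ u i) = ((N : ℂ) * τ * γ) • V *ᵥ u i := fun i => by
    rw [hVu, hW, mulVec_smul, mul_mul_transpose_mulVec_mulVec (hDu i)
      (mulVec_pertVec g α hαeig i), smul_comm, mul_comm (τ : ℂ)]
  have hinner : ∀ i i', star (V *ᵥ u i) ⬝ᵥ V *ᵥ u i' = star (u i) ⬝ᵥ u i' := fun i i' => by
    rw [hVu, hVu, star_smul, smul_dotProduct, dotProduct_smul,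
      star_mulVec_dotProduct_mulVec (blockD_conjTranspose ▸ hDu i'), smul_eq_mul, smul_eq_mul,
      ← mul_assoc, ← mul_assoc, Complex.star_def, Complex.conj_ofReal, hr, one_mul]
  have horth : ∀ i i', i ≠ i' → star (V *ᵥ u i) ⬝ᵥ V *ᵥ u i' = 0 := fun i i' h => by
    rw [hinner, star_pertVec_dotProduct_pertVec g hαinj, if_neg h]
  have hne : ∀ i : Fin m, 0 < (i : ℕ) → V *ᵥ u i ≠ 0 := fun i hi h0 =>
    star_pertVec_dotProduct_self_ne_zero g hαinj hi
      (by rw [← hinner, h0, star_zero, zero_dotProduct])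
  refine ⟨fun i _ => heig i, fun i i' _ _ => horth i i', ?_⟩
  let s : Fin (m - 1) → Fin m := fun t => ⟨t + 1, by omega⟩
  simpa using card_le_finrank_of_pairwise_star_dotProduct_eq_zero (v := fun t => V *ᵥ u (s t))
    (fun t => (Module.End.mem_eigenspace_iff.2 (heig (s t))))
    (fun t => hne (s t) t.val.succ_pos)
    (fun t t' h => horth _ _ fun h' => h (Fin.ext (by simpa [s] using congrArg Fin.val h')))

/-- one-large-block `G`-SBM. If `χ_{α_1},...,χ_{α_m}` are distinct characters
that are all `γ`-eigenvectors of the Cayley matrix `A`, then for `1 < i ≤ m` the vectors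
`V((i-1)χ_{α_i} - ∑_{j<i} χ_{α_j})` are pairwise orthogonal `Nτγ`-eigenvectors of the model
matrix `W`, so `Nτγ` is an eigenvalue of `W` of multiplicity at least `m - 1`. -/
theorem one_large_block_eigenvectors
    (n N : ℕ) (hn : 0 < n) (hN : 0 < N)
    (G : Type*) [CommGroup G] [Fintype G] [DecidableEq G]
    (g : Fin n ≃ G) (hg0 : g ⟨0, hn⟩ = 1)
    (f : G → ℝ) (hf : ∀ x : G, f x = f x⁻¹)
    (A : Matrix (Fin n) (Fin n) ℂ)
    (hA : ∀ i j, A i j = (f ((g i)⁻¹ * g j) : ℂ))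
    (τ : ℝ) (hτpos : 0 < τ) (hτlt : τ < 1 / n)
    (kτ : ℕ) (hkτ : (kτ : ℝ) = τ * N) (hkle : (n - 1) * kτ ≤ N)
    (k : Fin n → ℕ) (hk : ∀ i, k i = if (i : ℕ) = 0 then N - (n - 1) * kτ else kτ)
    (μ : Fin n → ℝ) (hμ : ∀ i, μ i = if (i : ℕ) = 0 then 1 - τ * (n - 1) else τ)
    (W : Matrix (Fin N) (Fin N) ℂ)
    (hW : W = blockD N n k * A * (blockD N n k)ᵀ)
    (V : Matrix (Fin N) (Fin n) ℂ)
    (hV : V = ((Real.sqrt N : ℂ))⁻¹ •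
        (blockD N n k * Matrix.diagonal fun i => ((Real.sqrt (μ i))⁻¹ : ℂ)))
    (m : ℕ) (hm : 1 < m)
    (α : Fin m → (G →* ℂ)) (hαuni : ∀ j, ∀ x : G, ‖α j x‖ = 1)
    (hαinj : Function.Injective α)
    (γ : ℂ)
    (hαeig : ∀ j : Fin m, A.mulVec (fun p => α j (g p)) = γ • fun p => α j (g p)) :
    (∀ i : Fin m, 0 < (i : ℕ) →
        W.mulVec (V.mulVec (pertVec g α i)) =
          ((N : ℂ) * (τ : ℂ) * γ) • V.mulVec (pertVec g α i)) ∧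
      (∀ i i' : Fin m, 0 < (i : ℕ) → 0 < (i' : ℕ) → i ≠ i' →
        star (V.mulVec (pertVec g α i)) ⬝ᵥ V.mulVec (pertVec g α i') = 0) ∧
      m - 1 ≤ Module.finrank ℂ
        (Module.End.eigenspace (Matrix.toLin' W) ((N : ℂ) * (τ : ℂ) * γ)) :=
  one_large_block_eigenvectors_general n N hn hN G g hg0 A τ hτpos kτ hkτ hkle k hk μ hμ W hW V hV m
    α hαinj γ hαeig
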